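/- arXiv:1708.05474 — 3 statements merged into one kernel-verified Lean document; each statement's English description precedes it below -/
import Mathlib

section
/- At the MBR point, where t·α = d·β with α, β > 0 real, t ≥ 1, d ≥ k ≥ 2 naturals, and m - ℓ = a·t + b with a ≥ 1 and 1 ≤ b ≤ t - 1, the functional-repair bound strictly exceeds the exact-repair bound: a·∑_{i=0}^{k-1} min(t·α, (d-i)·β) + ∑_{i=0}^{k-1} min(b·α, (d-i)·β) > (m-ℓ)·∑_{i=0}^{k-1} min(α, (d-i)·β/t). -/
/-!
At the MBR point every term `(d - i)β` is at most `dβ = tα`, so the functional bound collapses to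
`a·S + ∑ min(bα, (d-i)β)` and the exact bound to `(a + b/t)·S`, where `S = ∑ (d-i)β`. With
`c = b/t ∈ (0, 1)` and `M = tα`, each term satisfies `c·x ≤ min(c·M, x)` for `0 ≤ x ≤ M`, strictly
when `0 < x < M`; the term `i = 1`, i.e. `x = (d-1)β`, is such a term.
-/

open Finset

lemma mul_le_min_mul {c M x : ℝ} (hc0 : 0 ≤ c) (hc1 : c ≤ 1) (hx0 : 0 ≤ x) (hxM : x ≤ M) :
    c * x ≤ min (c * M) x :=
  le_min (mul_le_mul_of_nonneg_left hxM hc0) (mul_le_of_le_one_left hx0 hc1)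

lemma mul_lt_min_mul {c M x : ℝ} (hc0 : 0 < c) (hc1 : c < 1) (hx0 : 0 < x) (hxM : x < M) :
    c * x < min (c * M) x :=
  lt_min (mul_lt_mul_of_pos_left hxM hc0) (mul_lt_of_lt_one_left hx0 hc1)

lemma mul_sum_lt_sum_min {ι : Type*} {s : Finset ι} {f : ι → ℝ} {c M : ℝ}
    (hc0 : 0 < c) (hc1 : c < 1) (hf0 : ∀ i ∈ s, 0 ≤ f i) (hfM : ∀ i ∈ s, f i ≤ M)
    {j : ι} (hj : j ∈ s) (hj0 : 0 < f j) (hjM : f j < M) :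
    c * ∑ i ∈ s, f i < ∑ i ∈ s, min (c * M) (f i) := by
  rw [mul_sum]
  exact sum_lt_sum (fun i hi => mul_le_min_mul hc0.le hc1.le (hf0 i hi) (hfM i hi))
    ⟨j, hj, mul_lt_min_mul hc0 hc1 hj0 hjM⟩

theorem functional_gt_exact_at_MBR_general
    (m ℓ t k d a b : ℕ) (α β : ℝ)
    (hβ : 0 < β)
    (hk : 2 ≤ k) (hkd : k ≤ d)
    (hMBR : (t : ℝ) * α = (d : ℝ) * β)
    (hdiv : m - ℓ = a * t + b) (hb1 : 1 ≤ b) (hb2 : b ≤ t - 1) :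
    (a : ℝ) * ∑ i ∈ Finset.range k, min ((t : ℝ) * α) (((d - i : ℕ) : ℝ) * β)
      + ∑ i ∈ Finset.range k, min ((b : ℝ) * α) (((d - i : ℕ) : ℝ) * β)
      > ((m - ℓ : ℕ) : ℝ) *
        ∑ i ∈ Finset.range k, min α (((d - i : ℕ) : ℝ) * β / t) := by
  have ht : (0 : ℝ) < t := by exact_mod_cast (by omega : 0 < t)
  have hcap : ∀ i, ((d - i : ℕ) : ℝ) * β ≤ t * α := fun i => by
    rw [hMBR]; gcongr; exact_mod_cast Nat.sub_le d i
  set S := ∑ i ∈ range k, ((d - i : ℕ) : ℝ) * β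
  have hfunctional : ∑ i ∈ range k, min ((t : ℝ) * α) (((d - i : ℕ) : ℝ) * β) = S :=
    sum_congr rfl fun i _ => min_eq_right (hcap i)
  have hexact : ∑ i ∈ range k, min α (((d - i : ℕ) : ℝ) * β / t) = S / t := by
    rw [sum_div]
    exact sum_congr rfl fun i _ => min_eq_right ((div_le_iff₀' ht).2 (hcap i))
  have hrepair : (b / t : ℝ) * S < ∑ i ∈ range k, min ((b : ℝ) * α) (((d - i : ℕ) : ℝ) * β) := by
    have hbα : (b : ℝ) * α = b / t * (t * α) := by field_simp
    have hbt : (b : ℝ) < t := by exact_mod_cast (by omega : b < t)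
    have hd1 : (0 : ℝ) < ((d - 1 : ℕ) : ℝ) := by exact_mod_cast (by omega : 0 < d - 1)
    have hdd : ((d - 1 : ℕ) : ℝ) < d := by exact_mod_cast (by omega : d - 1 < d)
    rw [hbα]
    refine mul_sum_lt_sum_min (by positivity) ((div_lt_one ht).2 hbt)
      (fun i _ => by positivity) (fun i _ => hcap i) (mem_range.2 (by omega : 1 < k))
      (by positivity) ?_
    rw [hMBR]; gcongr
  have hml : ((m - ℓ : ℕ) : ℝ) = a * t + b := by rw [hdiv]; push_cast; ring
  rw [hfunctional, hexact, hml, gt_iff_lt]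
  have hsplit : ((a : ℝ) * t + b) * (S / t) = a * S + b / t * S := by field_simp
  linarith

theorem functional_gt_exact_at_MBR
    (m ℓ t k d a b : ℕ) (α β : ℝ)
    (hα : 0 < α) (hβ : 0 < β)
    (ht : 1 ≤ t) (hk : 2 ≤ k) (hkd : k ≤ d) (hlm : ℓ ≤ m)
    (hMBR : (t : ℝ) * α = (d : ℝ) * β)
    (hdiv : m - ℓ = a * t + b) (ha : 1 ≤ a) (hb1 : 1 ≤ b) (hb2 : b ≤ t - 1) :
    (a : ℝ) * ∑ i ∈ Finset.range k, min ((t : ℝ) * α) (((d - i : ℕ) : ℝ) * β)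
      + ∑ i ∈ Finset.range k, min ((b : ℝ) * α) (((d - i : ℕ) : ℝ) * β)
      > ((m - ℓ : ℕ) : ℝ) *
        ∑ i ∈ Finset.range k, min α (((d - i : ℕ) : ℝ) * β / t) :=
  functional_gt_exact_at_MBR_general m ℓ t k d a b α β hβ hk hkd hMBR hdiv hb1 hb2
end

section
/- For nonnegative reals α, β and naturals a_i, b_i, a, b, t, d, i, m, ℓ with t ≥ 1, b < t, b_i < t, a ≥ a_i or (a_i = a and b_i ≤ b), and a_i·t + b_i ≤ a·t + b = m - ℓ ≤ m: (m - a_i·t - b_i)·α + (a_i + [b_i > 0])·(d-i+1)·β ≥ ℓ·α + a·min(t·α, (d-i+1)·β) + min(b·α, (d-i+1)·β), where [b_i > 0] is 1 if b_i > 0 and 0 otherwise. -/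
set_option maxHeartbeats 1000000


theorem cut_contribution_lower_bound
    (m ℓ t d i a b a_i b_i : ℕ) (α β : ℝ)
    (hα : 0 ≤ α) (hβ : 0 ≤ β)
    (ht : 1 ≤ t) (ha : 1 ≤ a) (hb : b < t) (hbi : b_i < t)
    (hid : i ≤ d) (hlm : ℓ ≤ m)
    (hai : a_i ≤ a) (haib : a_i = a → b_i ≤ b)
    (hmi : a_i * t + b_i ≤ a * t + b)
    (hdiv : m - ℓ = a * t + b) :
    ((m : ℝ) - a_i * t - b_i) * α
      + ((a_i : ℝ) + (if 0 < b_i then (1 : ℝ) else 0)) * (((d - i + 1 : ℕ) : ℝ) * β)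
    ≥ (ℓ : ℝ) * α + (a : ℝ) * min ((t : ℝ) * α) (((d - i + 1 : ℕ) : ℝ) * β)
      + min ((b : ℝ) * α) (((d - i + 1 : ℕ) : ℝ) * β) := by
  set γ : ℝ := ((d - i + 1 : ℕ) : ℝ) * β with hγdef
  have hγ : 0 ≤ γ := mul_nonneg (Nat.cast_nonneg _) hβ
  have hm : (m : ℝ) = (ℓ : ℝ) + (a : ℝ) * t + b := by
    have h : m = ℓ + (a * t + b) := by omega
    rw [h]; push_cast; ring
  set A : ℝ := min ((t : ℝ) * α) γ with hA
  set B : ℝ := min ((b : ℝ) * α) γ with hB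
  have hA1 : A ≤ (t : ℝ) * α := min_le_left _ _
  have hA2 : A ≤ γ := min_le_right _ _
  have hB1 : B ≤ (b : ℝ) * α := min_le_left _ _
  have hB2 : B ≤ γ := min_le_right _ _
  have haiR : (a_i : ℝ) ≤ (a : ℝ) := by exact_mod_cast hai
  have h1 : (0:ℝ) ≤ (a_i : ℝ) * (γ - A) :=
    mul_nonneg (Nat.cast_nonneg _) (by linarith)
  rw [hm]
  by_cases hb0 : 0 < b_i
  · simp only [hb0, if_pos]
    by_cases hble : b_i ≤ b
    · -- combination: a_i(γ-A) + (a-a_i)(tα-A) + (γ-B) + (b-b_i)α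
      have h2 : (0:ℝ) ≤ ((a : ℝ) - a_i) * ((t : ℝ) * α - A) :=
        mul_nonneg (by linarith) (by linarith)
      have h3 : (0:ℝ) ≤ ((b : ℝ) - b_i) * α := by
        have : (b_i : ℝ) ≤ (b : ℝ) := by exact_mod_cast hble
        exact mul_nonneg (by linarith) hα
      nlinarith [h1, h2, h3]
    · have hlt : a_i < a := by
        rcases lt_or_eq_of_le hai with h | h
        · exact h
        · exact absurd (haib h) hble
      have hltR : (a_i : ℝ) + 1 ≤ (a : ℝ) := by exact_mod_cast hlt
      have h2 : (0:ℝ) ≤ ((a : ℝ) - a_i - 1) * ((t : ℝ) * α - A) :=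
        mul_nonneg (by linarith) (by linarith)
      have h3 : (0:ℝ) ≤ ((t : ℝ) + b - b_i) * α - B := by
        have hbiR : (b_i : ℝ) ≤ (t : ℝ) := by exact_mod_cast le_of_lt hbi
        have : (b : ℝ) * α ≤ ((t : ℝ) + b - b_i) * α := by
          apply mul_le_mul_of_nonneg_right _ hα; linarith
        linarith
      nlinarith [h1, h2, h3]
  · have hb0' : (b_i : ℝ) = 0 := by
      have : b_i = 0 := by omega
      exact_mod_cast this
    simp only [hb0, if_neg, not_false_iff]
    rcases lt_or_eq_of_le hai with hlt | heq
    · have hltR : (a_i : ℝ) + 1 ≤ (a : ℝ) := by exact_mod_cast hlt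
      have h2 : (0:ℝ) ≤ ((a : ℝ) - a_i - 1) * ((t : ℝ) * α - A) :=
        mul_nonneg (by linarith) (by linarith)
      have htα : (0:ℝ) ≤ (t : ℝ) * α := mul_nonneg (Nat.cast_nonneg _) hα
      nlinarith [h1, h2]
    · have heqR : (a_i : ℝ) = (a : ℝ) := by exact_mod_cast heq
      have h4 : (0:ℝ) ≤ (a : ℝ) * (γ - A) :=
        mul_nonneg (Nat.cast_nonneg _) (by linarith)
      nlinarith [h4]
end

section
/- Let m, t, k, d be naturals with t ≥ 1, d ≥ k ≥ 1, and let r = m mod t. At the MBR point (α = 1, β = t/d as rationals, so tα = dβ), if r ≤ ⌊(d-k+1)·t/d⌋, then for every ℓ with 0 ≤ ℓ ≤ r, the functional-repair capacity B_F*(ℓ) = ℓ·k + ⌊(m-ℓ)/t⌋·∑_{i=0}^{k-1} min(t, (d-i)·t/d) + ∑_{i=0}^{k-1} min((m-ℓ) mod t, (d-i)·t/d) equals B_F*(0), i.e., local help with ℓ ≤ m mod t local nodes gives no capacity gain. -/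
/-!
Since `ℓ ≤ m mod t`, passing from `m` to `m - ℓ` lowers the remainder `m mod t` by `ℓ` and leaves the
quotient `⌊m / t⌋` unchanged. The hypothesis on `m mod t` makes every remainder term
`min ((m - ℓ) mod t, (d - i)t/d)` equal to `(m - ℓ) mod t`, so the remainder sum loses exactly
`kℓ`, which is what the `ℓk` local term gains.
-/

/-- Functional-repair capacity at the MBR point `α = 1`, `β = t/d`, as a rational,
    with `ℓ` local helper nodes: `B_F*(ℓ) = ℓk + ⌊(m-ℓ)/t⌋·∑ min(t,(d-i)t/d)
    + ∑ min((m-ℓ) mod t, (d-i)t/d)`. -/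
def BFstarMBR (m t k d ℓ : ℕ) : ℚ :=
  (ℓ : ℚ) * k
    + (((m - ℓ) / t : ℕ) : ℚ) *
        ∑ i ∈ Finset.range k, min (t : ℚ) (((d - i : ℕ) : ℚ) * t / d)
    + ∑ i ∈ Finset.range k, min ((((m - ℓ) % t : ℕ)) : ℚ) (((d - i : ℕ) : ℚ) * t / d)

namespace Nat

theorem sub_eq_mul_div_add_mod_sub {m t j : ℕ} (hj : j ≤ m % t) :
    m - j = t * (m / t) + (m % t - j) := by
  have := Nat.div_add_mod m t
  omega

theorem sub_div_eq_div_of_le_mod {m t j : ℕ} (hj : j ≤ m % t) : (m - j) / t = m / t := by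
  rcases t.eq_zero_or_pos with rfl | ht
  · simp
  rw [sub_eq_mul_div_add_mod_sub hj, Nat.mul_add_div ht,
    Nat.div_eq_of_lt ((Nat.sub_le _ _).trans_lt (Nat.mod_lt m ht)), Nat.add_zero]

theorem sub_mod_eq_mod_sub_of_le_mod {m t j : ℕ} (hj : j ≤ m % t) :
    (m - j) % t = m % t - j := by
  rcases t.eq_zero_or_pos with rfl | ht
  · simp
  rw [sub_eq_mul_div_add_mod_sub hj, Nat.mul_add_mod,
    Nat.mod_eq_of_lt ((Nat.sub_le _ _).trans_lt (Nat.mod_lt m ht))]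

end Nat

theorem cast_le_cast_sub_mul_div_of_le_div {x t k d i : ℕ} (hkd : k ≤ d) (hi : i < k)
    (hx : x ≤ (d - k + 1) * t / d) : (x : ℚ) ≤ ((d - i : ℕ) : ℚ) * t / d :=
  calc (x : ℚ) ≤ (((d - k + 1) * t / d : ℕ) : ℚ) := by exact_mod_cast hx
    _ ≤ (((d - k + 1) * t : ℕ) : ℚ) / d := Nat.cast_div_le
    _ ≤ ((d - i : ℕ) : ℚ) * t / d := by
      push_cast
      gcongr
      exact_mod_cast (by omega : d - k + 1 ≤ d - i)

theorem BFstarMBR_eq_of_le_mod {m t k d ℓ : ℕ} (hℓ : ℓ ≤ m % t)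
    (hsat : ∀ i < k, ((m % t : ℕ) : ℚ) ≤ ((d - i : ℕ) : ℚ) * t / d) :
    BFstarMBR m t k d ℓ = ((m / t : ℕ) : ℚ) *
        ∑ i ∈ Finset.range k, min (t : ℚ) (((d - i : ℕ) : ℚ) * t / d) + k * (m % t : ℕ) := by
  have hmin : ∀ i ∈ Finset.range k,
      min ((((m - ℓ) % t : ℕ)) : ℚ) (((d - i : ℕ) : ℚ) * t / d) = ((m % t - ℓ : ℕ) : ℚ) := by
    intro i hi
    rw [Nat.sub_mod_eq_mod_sub_of_le_mod hℓ]
    exact min_eq_left ((Nat.cast_le.mpr (Nat.sub_le _ _)).trans (hsat i (Finset.mem_range.mp hi)))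
  rw [BFstarMBR, Nat.sub_div_eq_div_of_le_mod hℓ, Finset.sum_congr rfl hmin, Finset.sum_const,
    Finset.card_range, nsmul_eq_mul, Nat.cast_sub hℓ]
  ring

theorem no_gain_from_few_local_helpers_general
    (m t k d : ℕ)
    (hkd : k ≤ d)
    (hr : m % t ≤ (d - k + 1) * t / d) :
    ∀ ℓ ≤ m % t, BFstarMBR m t k d ℓ = BFstarMBR m t k d 0 := by
  intro ℓ hℓ
  have hsat : ∀ i < k, ((m % t : ℕ) : ℚ) ≤ ((d - i : ℕ) : ℚ) * t / d :=
    fun i hi ↦ cast_le_cast_sub_mul_div_of_le_div hkd hi hr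
  rw [BFstarMBR_eq_of_le_mod hℓ hsat, BFstarMBR_eq_of_le_mod (Nat.zero_le _) hsat]

theorem no_gain_from_few_local_helpers
    (m t k d : ℕ)
    (ht : 1 ≤ t) (hk : 1 ≤ k) (hkd : k ≤ d)
    (hm : t + m % t ≤ m)
    (hr : m % t ≤ (d - k + 1) * t / d) :
    ∀ ℓ ≤ m % t, BFstarMBR m t k d ℓ = BFstarMBR m t k d 0 :=
  no_gain_from_few_local_helpers_general m t k d hkd hr
end
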